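/- Let S' be an isolated suborder of a partially ordered set (S,≤), let Q be the set of equivalence classes of ≡_{S'} partially ordered by the quotient relation ≤_{S'}, and let 𝒮 ⊆ Q be an isolated suborder with bottleneck of (Q, ≤_{S'}). Then S'' := ⋃𝒮, the union of the equivalence classes belonging to 𝒮, is an isolated suborder with bottleneck of (S,≤). -/

import Mathlib

/-- `S'` is an *isolated suborder* of the partially ordered set. -/
def IsIsolatedSuborder {α : Type*} [PartialOrder α] (S' : Set α) : Prop :=
  ∃ b t, IsLeast S' b ∧ IsGreatest S' t ∧
    ∀ x ∉ S', ∀ y ∈ S', (y ≤ x → t ≤ x) ∧ (x ≤ y → x ≤ b)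

/-- The equivalence class of `x` under `≡_{S'}`. -/
def eqClass {α : Type*} (S' : Set α) (x : α) : Set α :=
  {y | (x ∈ S' ∧ y ∈ S') ∨ (x ∉ S' ∧ y = x)}

/-- The set of equivalence classes of `≡_{S'}`. -/
def quotClasses {α : Type*} (S' : Set α) : Set (Set α) :=
  Set.range (eqClass S')

/-- The quotient relation on equivalence classes. -/
def qle {α : Type*} [PartialOrder α] (A B : Set α) : Prop :=
  ∃ a ∈ A, ∃ b ∈ B, a ≤ b

/-- `b` is the least element of `A` with respect to the relation `r`. -/
def IsLeastRel {β : Type*} (r : β → β → Prop) (A : Set β) (b : β) : Prop :=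
  b ∈ A ∧ ∀ y ∈ A, r b y

/-- `t` is the greatest element of `A` with respect to the relation `r`. -/
def IsGreatestRel {β : Type*} (r : β → β → Prop) (A : Set β) (t : β) : Prop :=
  t ∈ A ∧ ∀ y ∈ A, r y t

/-- `S'` is an isolated suborder of the ordered set with carrier `carrier` and
order relation `r`. -/
def IsIsolatedSuborderRel {β : Type*} (r : β → β → Prop) (carrier S' : Set β) : Prop :=
  S' ⊆ carrier ∧ ∃ b t, IsLeastRel r S' b ∧ IsGreatestRel r S' t ∧
    ∀ x ∈ carrier, x ∉ S' → ∀ y ∈ S', (r y x → r t x) ∧ (r x y → r x b)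

/-- `b` is a *bottleneck* of `x`: `b > x`, the interval `[x,b]` is a chain, and every
`y > x` lies in `[x,b]` or satisfies `y > b`. -/
def IsBottleneck {α : Type*} [PartialOrder α] (x b : α) : Prop :=
  x < b ∧ IsChain (· ≤ ·) (Set.Icc x b) ∧ ∀ y, x < y → y ∈ Set.Icc x b ∨ b < y

/-- `b` is a bottleneck of `x` in the ordered set with carrier `carrier` and order
relation `r`: `b > x`, the interval `[x,b]` (within the carrier) is a chain, and
every `y > x` in the carrier lies in `[x,b]` or satisfies `y > b`. -/
def IsBottleneckRel {β : Type*} (r : β → β → Prop) (carrier : Set β) (x b : β) : Prop :=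
  b ∈ carrier ∧ r x b ∧ x ≠ b ∧
  (∀ u ∈ carrier, r x u → r u b → ∀ v ∈ carrier, r x v → r v b → r u v ∨ r v u) ∧
  (∀ y ∈ carrier, r x y → x ≠ y → (r y b ∨ (r b y ∧ b ≠ y)))

/-! Because `S'` is isolated, distinct classes `A ≠ C` with `qle A C` are ordered elementwise:
every element of `A` lies below every element of `C`. So the quotient is `α` with `S'` collapsed
to a point, the extreme elements of the extreme classes of `𝒮` are the extreme elements of `⋃₀ 𝒮`,
and isolation transfers. If `S'` lies strictly between the top class `T` of `𝒮` and its bottleneck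
`B`, then `S'` is itself a bottleneck of `T`; after this replacement no non-singleton class lies
strictly between `T` and `B`, so the least element of `B` is a bottleneck of the greatest element
of `T`. -/

theorem IsBottleneckRel.of_between {β : Type*} {r : β → β → Prop} {s : Set β}
    (htrans : ∀ a ∈ s, ∀ b ∈ s, ∀ c ∈ s, r a b → r b c → r a c)
    (hanti : ∀ a ∈ s, ∀ b ∈ s, r a b → r b a → a = b) {x b c : β}
    (h : IsBottleneckRel r s x b) (hc : c ∈ s) (hxc : r x c) (hxc' : x ≠ c) (hcb : r c b) :
    IsBottleneckRel r s x c := by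
  obtain ⟨hb, -, -, hchain, hnext⟩ := h
  refine ⟨hc, hxc, hxc', fun u hu hxu huc v hv hxv hvc =>
    hchain u hu hxu (htrans u hu c hc b hb huc hcb) v hv hxv (htrans v hv c hc b hb hvc hcb),
    fun y hy hxy hxy' => ?_⟩
  rcases hnext y hy hxy hxy' with hyb | ⟨hby, hby'⟩
  · rcases hchain y hy hxy hyb c hc hxc hcb with hyc | hcy
    · exact Or.inl hyc
    · by_cases hcy' : c = y
      · exact Or.inl (hcy' ▸ hcy)
      · exact Or.inr ⟨hcy, hcy'⟩
  · refine Or.inr ⟨htrans c hc b hb y hy hcb hby, ?_⟩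
    rintro rfl
    exact hby' (hanti b hb c hc hby hcb)

section Quotient

variable {α : Type*} {S' : Set α}

theorem mem_eqClass_self (x : α) : x ∈ eqClass S' x := by
  by_cases hx : x ∈ S'
  · exact Or.inl ⟨hx, hx⟩
  · exact Or.inr ⟨hx, rfl⟩

theorem eqClass_mem_quotClasses (x : α) : eqClass S' x ∈ quotClasses S' := ⟨x, rfl⟩

theorem eqClass_of_mem {x : α} (hx : x ∈ S') : eqClass S' x = S' := by
  ext y
  simp [eqClass, hx]

theorem eqClass_of_notMem {x : α} (hx : x ∉ S') : eqClass S' x = {x} := by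
  ext y
  simp [eqClass, hx]

theorem eq_or_eq_singleton_of_mem_quotClasses {A : Set α} (hA : A ∈ quotClasses S') :
    A = S' ∨ ∃ x ∉ S', A = {x} := by
  obtain ⟨x, rfl⟩ := hA
  by_cases hx : x ∈ S'
  · exact Or.inl (eqClass_of_mem hx)
  · exact Or.inr ⟨x, hx, eqClass_of_notMem hx⟩

theorem eq_eqClass_of_mem {A : Set α} (hA : A ∈ quotClasses S') {x : α} (hx : x ∈ A) :
    A = eqClass S' x := by
  rcases eq_or_eq_singleton_of_mem_quotClasses hA with rfl | ⟨z, hz, rfl⟩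
  · exact (eqClass_of_mem hx).symm
  · rw [Set.mem_singleton_iff.mp hx, eqClass_of_notMem hz]

theorem mem_of_eqClass_eq {u v : α} (h : eqClass S' u = eqClass S' v) (huv : u ≠ v) :
    u ∈ S' := by
  by_contra hu
  have hv : v ∈ eqClass S' u := h ▸ mem_eqClass_self v
  rw [eqClass_of_notMem hu] at hv
  exact huv hv.symm

variable [PartialOrder α]

namespace IsIsolatedSuborder

theorem mem_quotClasses (hS' : IsIsolatedSuborder S') :
    S' ∈ quotClasses S' := by
  obtain ⟨b₀, -, hb₀, -⟩ := hS'
  exact ⟨b₀, eqClass_of_mem hb₀.1⟩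

theorem exists_isLeast_isGreatest (hS' : IsIsolatedSuborder S')
    {A : Set α} (hA : A ∈ quotClasses S') : ∃ l g, IsLeast A l ∧ IsGreatest A g := by
  rcases eq_or_eq_singleton_of_mem_quotClasses hA with rfl | ⟨x, -, rfl⟩
  · obtain ⟨b₀, t₀, hb₀, ht₀, -⟩ := hS'
    exact ⟨b₀, t₀, hb₀, ht₀⟩
  · exact ⟨x, x, isLeast_singleton, isGreatest_singleton⟩

theorem le_of_qle_of_ne (hS' : IsIsolatedSuborder S') {A C : Set α}
    (hA : A ∈ quotClasses S') (hC : C ∈ quotClasses S') (hAC : A ≠ C) (h : qle A C)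
    {a c : α} (ha : a ∈ A) (hc : c ∈ C) : a ≤ c := by
  obtain ⟨b₀, t₀, hb₀, ht₀, hiso⟩ := hS'
  obtain ⟨a', ha', c', hc', hac'⟩ := h
  rcases eq_or_eq_singleton_of_mem_quotClasses hA with rfl | ⟨x, hx, rfl⟩
  · rcases eq_or_eq_singleton_of_mem_quotClasses hC with rfl | ⟨z, hz, rfl⟩
    · exact absurd rfl hAC
    · obtain rfl := Set.mem_singleton_iff.mp hc
      obtain rfl := Set.mem_singleton_iff.mp hc'
      exact (ht₀.2 ha).trans ((hiso _ hz a' ha').1 hac')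
  · obtain rfl := Set.mem_singleton_iff.mp ha
    obtain rfl := Set.mem_singleton_iff.mp ha'
    rcases eq_or_eq_singleton_of_mem_quotClasses hC with rfl | ⟨z, hz, rfl⟩
    · exact ((hiso _ hx c' hc').2 hac').trans (hb₀.2 hc)
    · obtain rfl := Set.mem_singleton_iff.mp hc
      obtain rfl := Set.mem_singleton_iff.mp hc'
      exact hac'

theorem lt_of_qle_of_ne (hS' : IsIsolatedSuborder S') {A C : Set α}
    (hA : A ∈ quotClasses S') (hC : C ∈ quotClasses S') (hAC : A ≠ C) (h : qle A C)
    {a c : α} (ha : a ∈ A) (hc : c ∈ C) : a < c := by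
  refine (hS'.le_of_qle_of_ne hA hC hAC h ha hc).lt_of_ne ?_
  rintro rfl
  exact hAC ((eq_eqClass_of_mem hA ha).trans (eq_eqClass_of_mem hC hc).symm)

theorem qle_trans (hS' : IsIsolatedSuborder S') {A B C : Set α}
    (hA : A ∈ quotClasses S') (hB : B ∈ quotClasses S') (hAB : qle A B) (hBC : qle B C) :
    qle A C := by
  by_cases h : A = B
  · exact h ▸ hBC
  · obtain ⟨a, ha, -⟩ := id hAB
    obtain ⟨b, hb, c, hc, hbc⟩ := hBC
    exact ⟨a, ha, c, hc, (hS'.le_of_qle_of_ne hA hB h hAB ha hb).trans hbc⟩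

theorem qle_antisymm (hS' : IsIsolatedSuborder S') {A B : Set α}
    (hA : A ∈ quotClasses S') (hB : B ∈ quotClasses S') (hAB : qle A B) (hBA : qle B A) :
    A = B := by
  by_contra h
  obtain ⟨a, ha, b, hb, hab⟩ := hAB
  exact (hS'.lt_of_qle_of_ne hB hA (Ne.symm h) hBA hb ha).not_ge hab

theorem isGreatest_sUnion (hS' : IsIsolatedSuborder S') {𝒮 : Set (Set α)}
    (h𝒮 : 𝒮 ⊆ quotClasses S') {T : Set α} (hT : IsGreatestRel qle 𝒮 T) {t : α}
    (ht : IsGreatest T t) : IsGreatest (⋃₀ 𝒮) t := by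
  refine ⟨⟨T, hT.1, ht.1⟩, ?_⟩
  rintro x ⟨A, hA, hx⟩
  by_cases hAT : A = T
  · exact ht.2 (hAT ▸ hx)
  · exact hS'.le_of_qle_of_ne (h𝒮 hA) (h𝒮 hT.1) hAT (hT.2 A hA) hx ht.1

theorem isLeast_sUnion (hS' : IsIsolatedSuborder S') {𝒮 : Set (Set α)}
    (h𝒮 : 𝒮 ⊆ quotClasses S') {B : Set α} (hB : IsLeastRel qle 𝒮 B) {b : α}
    (hb : IsLeast B b) : IsLeast (⋃₀ 𝒮) b := by
  refine ⟨⟨B, hB.1, hb.1⟩, ?_⟩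
  rintro x ⟨A, hA, hx⟩
  by_cases hBA : B = A
  · exact hb.2 (hBA ▸ hx)
  · exact hS'.le_of_qle_of_ne (h𝒮 hB.1) (h𝒮 hA) hBA (hB.2 A hA) hb.1 hx

theorem sUnion (hS' : IsIsolatedSuborder S') {𝒮 : Set (Set α)}
    (h𝒮 : IsIsolatedSuborderRel qle (quotClasses S') 𝒮) : IsIsolatedSuborder (⋃₀ 𝒮) := by
  obtain ⟨h𝒮S', B, T, hB, hT, hiso⟩ := h𝒮
  obtain ⟨b, -, hb, -⟩ := hS'.exists_isLeast_isGreatest (h𝒮S' hB.1)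
  obtain ⟨-, t, -, ht⟩ := hS'.exists_isLeast_isGreatest (h𝒮S' hT.1)
  refine ⟨b, t, hS'.isLeast_sUnion h𝒮S' hB hb, hS'.isGreatest_sUnion h𝒮S' hT ht, ?_⟩
  intro x hx y ⟨A, hA, hy⟩
  have hX : eqClass S' x ∉ 𝒮 := fun h => hx ⟨_, h, mem_eqClass_self x⟩
  have hXq := eqClass_mem_quotClasses (S' := S') x
  constructor
  · intro hyx
    have hTX := (hiso _ hXq hX A hA).1 ⟨y, hy, x, mem_eqClass_self x, hyx⟩
    exact hS'.le_of_qle_of_ne (h𝒮S' hT.1) hXq (fun h => hX (h ▸ hT.1)) hTX ht.1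
      (mem_eqClass_self x)
  · intro hxy
    have hXB := (hiso _ hXq hX A hA).2 ⟨x, mem_eqClass_self x, y, hy, hxy⟩
    exact hS'.le_of_qle_of_ne hXq (h𝒮S' hB.1) (fun h => hX (h ▸ hB.1)) hXB
      (mem_eqClass_self x) hb.1

theorem isBottleneck_of_isBottleneckRel (hS' : IsIsolatedSuborder S') {T C : Set α}
    (hT : T ∈ quotClasses S') (hbn : IsBottleneckRel qle (quotClasses S') T C)
    (hS'TC : ¬(qle T S' ∧ T ≠ S' ∧ qle S' C ∧ S' ≠ C)) {t c : α}
    (ht : IsGreatest T t) (hc : IsLeast C c) : IsBottleneck t c := by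
  obtain ⟨hC, hTC, hTC', hchain, hnext⟩ := hbn
  have hcls := eqClass_mem_quotClasses (S' := S')
  have hself := mem_eqClass_self (S' := S')
  refine ⟨hS'.lt_of_qle_of_ne hT hC hTC' hTC ht.1 hc.1, ?_, fun y hty => ?_⟩
  · rintro u ⟨htu, huc⟩ v ⟨htv, hvc⟩ huv
    by_cases hUV : eqClass S' u = eqClass S' v
    · have hu := mem_of_eqClass_eq hUV huv
      have hv := mem_of_eqClass_eq hUV.symm (Ne.symm huv)
      have hend : T = S' ∨ S' = C := by
        by_contra! h
        exact hS'TC ⟨⟨t, ht.1, u, hu, htu⟩, h.1, ⟨u, hu, c, hc.1, huc⟩, h.2⟩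
      rcases hend with rfl | rfl
      · exact absurd (((ht.2 hu).antisymm htu).trans ((ht.2 hv).antisymm htv).symm) huv
      · exact absurd (((hc.2 hu).antisymm' huc).trans ((hc.2 hv).antisymm' hvc).symm) huv
    · rcases hchain _ (hcls u) ⟨t, ht.1, u, hself u, htu⟩ ⟨u, hself u, c, hc.1, huc⟩
        _ (hcls v) ⟨t, ht.1, v, hself v, htv⟩ ⟨v, hself v, c, hc.1, hvc⟩ with h | h
      · exact Or.inl (hS'.le_of_qle_of_ne (hcls u) (hcls v) hUV h (hself u) (hself v))
      · exact Or.inr (hS'.le_of_qle_of_ne (hcls v) (hcls u) (Ne.symm hUV) h (hself v) (hself u))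
  · have hTY : T ≠ eqClass S' y := fun h => hty.not_ge (ht.2 (h ▸ hself y))
    rcases hnext _ (hcls y) ⟨t, ht.1, y, hself y, hty.le⟩ hTY with hYC | ⟨hCY, hCY'⟩
    · by_cases hYC' : eqClass S' y = C
      · rcases (hc.2 (hYC' ▸ hself y)).eq_or_lt with h | h
        · exact Or.inl ⟨hty.le, h.ge⟩
        · exact Or.inr h
      · exact Or.inl ⟨hty.le, hS'.le_of_qle_of_ne (hcls y) hC hYC' hYC (hself y) hc.1⟩
    · exact Or.inr (hS'.lt_of_qle_of_ne hC (hcls y) hCY' hCY hc.1 (hself y))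

end IsIsolatedSuborder

end Quotient

/-- If `𝒮` is an isolated suborder with bottleneck of the quotient of `(S,≤)` by an
isolated suborder `S'`, then the union of the classes in `𝒮` is an isolated
suborder with bottleneck of `(S,≤)`. -/
theorem sUnion_isolatedSuborder_withBottleneck {α : Type*} [PartialOrder α] (S' : Set α)
    (hS' : IsIsolatedSuborder S') (𝒮 : Set (Set α))
    (h𝒮 : IsIsolatedSuborderRel qle (quotClasses S') 𝒮)
    (hbn : ∃ T B, IsGreatestRel qle 𝒮 T ∧ IsBottleneckRel qle (quotClasses S') T B) :
    IsIsolatedSuborder (⋃₀ 𝒮) ∧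
      ∃ t b : α, IsGreatest (⋃₀ 𝒮) t ∧ IsBottleneck t b := by
  refine ⟨hS'.sUnion h𝒮, ?_⟩
  obtain ⟨T, B, hT, hTB⟩ := hbn
  have hTq := h𝒮.1 hT.1
  obtain ⟨-, t, -, ht⟩ := hS'.exists_isLeast_isGreatest hTq
  refine ⟨t, ?_⟩
  have htop := hS'.isGreatest_sUnion h𝒮.1 hT ht
  by_cases hS'TB : qle T S' ∧ T ≠ S' ∧ qle S' B
  · obtain ⟨b₀, -, hb₀, -⟩ := id hS'
    have hTS' : IsBottleneckRel qle (quotClasses S') T S' :=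
      hTB.of_between (r := qle) (fun _ hA _ hB _ _ => hS'.qle_trans hA hB)
        (fun _ hA _ hB => hS'.qle_antisymm hA hB) hS'.mem_quotClasses hS'TB.1 hS'TB.2.1 hS'TB.2.2
    exact ⟨b₀, htop,
      hS'.isBottleneck_of_isBottleneckRel hTq hTS' (fun h => h.2.2.2 rfl) ht hb₀⟩
  · obtain ⟨b, -, hb, -⟩ := hS'.exists_isLeast_isGreatest hTB.1
    exact ⟨b, htop, hS'.isBottleneck_of_isBottleneckRel hTq hTB
      (fun h => hS'TB ⟨h.1, h.2.1, h.2.2.1⟩) ht hb⟩
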